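/- arXiv:math/0412528 — 2 statements merged into one kernel-verified Lean document; each statement's English description precedes it below -/
import Mathlib

section
/- Let φ_1, φ_2 be strictly positive unital linear functionals on ℂ[X] (polynomials in one variable), and let φ = φ_1 ⋆ φ_2 denote their free product on the free algebra P_2. Then the moment kernel K_φ restricted to the two words {1, 12} is a singular 2×2 matrix; in particular φ is not strictly positive. -/
open scoped ComplexOrder

/-- The involution on one-variable polynomials: conjugate the coefficients. -/
noncomputable def pstar (p : Polynomial ℂ) : Polynomial ℂ := p.map (starRingEnd ℂ)

/-- The monomial `X_σ` in the free algebra `P_N`, for a word `σ`. -/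
noncomputable def Xw {N : ℕ} (σ : List (Fin N)) : FreeAlgebra ℂ (Fin N) :=
  (σ.map (FreeAlgebra.ι ℂ)).prod

/-!
With `a = φ_1(X²)` and `b = φ_2(X)`, freeness gives the moment kernel on the words `1, 12` as
`[[a, ab], [ba, bab]]`: its second row is `b` times its first, so it is singular. A nonzero
kernel vector `v = (-b, 1)` yields the nonzero element `P = X₁X₂ - b X₁` (monomials of distinct
words are linearly independent) with `φ(P⋆P) = vᵀ K v = 0`.
-/

open Polynomial FreeAlgebra Matrix

theorem FreeAlgebra.star_smul_eq {R X : Type*} [CommSemiring R] (c : R) (x : FreeAlgebra R X) :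
    star (c • x) = c • star x := by
  rw [Algebra.smul_def, star_mul, star_algebraMap, ← Algebra.commutes, ← Algebra.smul_def]

theorem FreeAlgebra.basisFreeMonoid_apply {R X : Type*} [CommSemiring R] (m : FreeMonoid X) :
    basisFreeMonoid R X m = FreeMonoid.lift (ι R) m := by
  simp [basisFreeMonoid, equivMonoidAlgebraFreeMonoid]

section MomentKernel

variable {N : ℕ} {n : Type*}

theorem Xw_append (σ τ : List (Fin N)) : Xw (σ ++ τ) = Xw σ * Xw τ := by
  simp [Xw]

theorem star_Xw (σ : List (Fin N)) : star (Xw σ) = Xw σ.reverse := by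
  induction σ with
  | nil => simp [Xw]
  | cons i σ ih => simp_all [Xw]

theorem Xw_eq_basisFreeMonoid (σ : List (Fin N)) :
    Xw σ = basisFreeMonoid ℂ (Fin N) (FreeMonoid.ofList σ) := by
  simp [Xw, basisFreeMonoid_apply]

theorem linearIndependent_Xw {w : n → List (Fin N)} (hw : w.Injective) :
    LinearIndependent ℂ (fun α => Xw (w α)) := by
  simp_rw [Xw_eq_basisFreeMonoid]
  exact (basisFreeMonoid ℂ (Fin N)).linearIndependent.comp _
    (FreeMonoid.ofList.injective.comp hw)

noncomputable def momentKernel (φ : FreeAlgebra ℂ (Fin N) →ₗ[ℂ] ℂ) (w : n → List (Fin N)) :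
    Matrix n n ℂ :=
  Matrix.of fun α β => φ (Xw ((w α).reverse ++ w β))

variable [Fintype n]

-- The involution of `FreeAlgebra` reverses words and is `ℂ`-linear, so the form is bilinear.
theorem map_star_mul_self_eq_dotProduct (φ : FreeAlgebra ℂ (Fin N) →ₗ[ℂ] ℂ)
    (w : n → List (Fin N)) (v : n → ℂ) :
    φ (star (∑ α, v α • Xw (w α)) * ∑ β, v β • Xw (w β)) = v ⬝ᵥ (momentKernel φ w *ᵥ v) := by
  simp only [star_sum, star_smul_eq, star_Xw, Finset.sum_mul, Finset.mul_sum, smul_mul_smul_comm,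
    ← Xw_append, map_sum, map_smul, smul_eq_mul]
  simp only [dotProduct, mulVec, momentKernel, of_apply, Finset.mul_sum]
  rw [Finset.sum_comm]
  exact Finset.sum_congr rfl fun α _ => Finset.sum_congr rfl fun β _ => by ring

theorem exists_ne_zero_map_star_mul_self_eq_zero_of_det_momentKernel_eq_zero [DecidableEq n]
    (φ : FreeAlgebra ℂ (Fin N) →ₗ[ℂ] ℂ) {w : n → List (Fin N)} (hw : w.Injective)
    (hdet : (momentKernel φ w).det = 0) :
    ∃ P ≠ 0, φ (star P * P) = 0 := by
  obtain ⟨v, hv, hKv⟩ := exists_mulVec_eq_zero_iff.mpr hdet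
  refine ⟨∑ α, v α • Xw (w α), fun h => hv ?_, ?_⟩
  · exact funext (Fintype.linearIndependent_iff.mp (linearIndependent_Xw hw) v h)
  · rw [map_star_mul_self_eq_dotProduct, hKv, dotProduct_zero]

end MomentKernel

section FreeProduct

variable {R I : Type*} [CommSemiring R]

def IsFreeProduct (φv : I → R[X] →ₗ[R] R) (φ : FreeAlgebra R I →ₗ[R] R) : Prop :=
  ∀ l : List (I × R[X]), l.IsChain (fun x y => x.1 ≠ y.1) → (∀ x ∈ l, x.2.coeff 0 = 0) →
    φ ((l.map fun x => aeval (ι R x.1) x.2).prod) = (l.map fun x => φv x.1 x.2).prod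

theorem IsFreeProduct.map_prod_pow {φv : I → R[X] →ₗ[R] R} {φ : FreeAlgebra R I →ₗ[R] R}
    (hφ : IsFreeProduct φv φ) (l : List (I × ℕ)) (hl : l.IsChain (fun x y => x.1 ≠ y.1))
    (hpos : ∀ x ∈ l, x.2 ≠ 0) :
    φ ((l.map fun x => ι R x.1 ^ x.2).prod) = (l.map fun x => φv x.1 (X ^ x.2)).prod := by
  have := hφ (l.map fun x => (x.1, X ^ x.2)) ((List.isChain_map _).mpr hl) (by
    simp only [List.mem_map]
    rintro _ ⟨x, hx, rfl⟩
    simp [coeff_X_pow, (hpos x hx).symm])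
  simpa [Function.comp_def] using this

end FreeProduct

section OneOneTwo

variable {φv : Fin 2 → ℂ[X] →ₗ[ℂ] ℂ} {φ : FreeAlgebra ℂ (Fin 2) →ₗ[ℂ] ℂ}

theorem IsFreeProduct.momentKernel_one_oneTwo (hφ : IsFreeProduct φv φ) :
    momentKernel φ ![[0], [0, 1]] =
      !![φv 0 (X ^ 2), φv 0 (X ^ 2) * φv 1 X;
        φv 1 X * φv 0 (X ^ 2), φv 1 X * φv 0 (X ^ 2) * φv 1 X] := by
  ext i j
  fin_cases i <;> fin_cases j <;> simp only [momentKernel, Xw]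
  · simpa [pow_two] using hφ.map_prod_pow [(0, 2)] (by simp) (by simp)
  · simpa [pow_two, mul_assoc] using hφ.map_prod_pow [(0, 2), (1, 1)] (by simp) (by simp)
  · simpa [pow_two, mul_assoc] using hφ.map_prod_pow [(1, 1), (0, 2)] (by simp) (by simp)
  · simpa [pow_two, mul_assoc] using hφ.map_prod_pow [(1, 1), (0, 2), (1, 1)] (by simp) (by simp)

theorem IsFreeProduct.det_momentKernel_one_oneTwo (hφ : IsFreeProduct φv φ) :
    (momentKernel φ ![[0], [0, 1]]).det = 0 := by
  rw [hφ.momentKernel_one_oneTwo, det_fin_two_of]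
  ring

end OneOneTwo

theorem free_product_not_strictly_positive_general
    (φv : Fin 2 → Polynomial ℂ →ₗ[ℂ] ℂ)
    (φ : FreeAlgebra ℂ (Fin 2) →ₗ[ℂ] ℂ)
    (hfree : ∀ l : List (Fin 2 × Polynomial ℂ),
      List.Chain' (fun x y => x.1 ≠ y.1) l →
      (∀ x ∈ l, (x.2).coeff 0 = 0) →
      φ ((l.map fun x => Polynomial.aeval (FreeAlgebra.ι ℂ x.1) x.2).prod)
        = (l.map fun x => φv x.1 x.2).prod) :
    (!![φ (Xw (([0] : List (Fin 2)).reverse ++ [0])),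
        φ (Xw (([0] : List (Fin 2)).reverse ++ [0, 1]));
        φ (Xw (([0, 1] : List (Fin 2)).reverse ++ [0])),
        φ (Xw (([0, 1] : List (Fin 2)).reverse ++ [0, 1]))] :
      Matrix (Fin 2) (Fin 2) ℂ).det = 0 ∧
    ¬ (∀ P : FreeAlgebra ℂ (Fin 2), P ≠ 0 → 0 < φ (star P * P)) := by
  have hdet : (momentKernel φ ![[0], [0, 1]]).det = 0 :=
    IsFreeProduct.det_momentKernel_one_oneTwo hfree
  refine ⟨by rwa [eta_fin_two (momentKernel _ _)] at hdet, fun hpos => ?_⟩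
  obtain ⟨P, hP, hφP⟩ :=
    exists_ne_zero_map_star_mul_self_eq_zero_of_det_momentKernel_eq_zero φ (by decide) hdet
  exact (hpos P hP).ne' hφP

/-- if `φ = φ_1 ⋆ φ_2` is the free product of two strictly positive
unital functionals on `ℂ[X]`, then the moment kernel `K_φ(α,β) = φ(X_{I(α)}X_β)`
restricted to the words `{1, 12}` is a singular `2×2` matrix; in particular `φ`
is not strictly positive. -/
theorem free_product_not_strictly_positive
    (φv : Fin 2 → Polynomial ℂ →ₗ[ℂ] ℂ)
    (hunit : ∀ k, φv k 1 = 1)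
    (hpos : ∀ k, ∀ p : Polynomial ℂ, p ≠ 0 → 0 < φv k (pstar p * p))
    (φ : FreeAlgebra ℂ (Fin 2) →ₗ[ℂ] ℂ) (hφ1 : φ 1 = 1)
    (hfree : ∀ l : List (Fin 2 × Polynomial ℂ),
      List.Chain' (fun x y => x.1 ≠ y.1) l →
      (∀ x ∈ l, (x.2).coeff 0 = 0) →
      φ ((l.map fun x => Polynomial.aeval (FreeAlgebra.ι ℂ x.1) x.2).prod)
        = (l.map fun x => φv x.1 x.2).prod) :
    (!![φ (Xw (([0] : List (Fin 2)).reverse ++ [0])),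
        φ (Xw (([0] : List (Fin 2)).reverse ++ [0, 1]));
        φ (Xw (([0, 1] : List (Fin 2)).reverse ++ [0])),
        φ (Xw (([0, 1] : List (Fin 2)).reverse ++ [0, 1]))] :
      Matrix (Fin 2) (Fin 2) ℂ).det = 0 ∧
    ¬ (∀ P : FreeAlgebra ℂ (Fin 2), P ≠ 0 → 0 < φ (star P * P)) :=
  free_product_not_strictly_positive_general φv φ hfree
end

section
/- With the hypotheses of the path-expansion theorem, the moments of a strictly positive functional φ on P_N satisfy s_σ = Σ_{p ∈ M_σ} w(p) for every nonempty word σ, where M_σ is the set of admissible colored Motzkin-type paths from (0,i_p,0) to (|σ|,i_1,0) and w is the matrix-weight function determined by the Jacobi coefficients A_{n,k}, B_{n,k} of φ. -/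
open scoped ComplexOrder

/-- The underlying vector space `l²`-span: finitely supported functions on `F_N^+`. -/
abbrev W (N : ℕ) := List (Fin N) →₀ ℂ

/-- The standard basis vector `e_σ`. -/
noncomputable def eb {N : ℕ} (σ : List (Fin N)) : W N := Finsupp.single σ 1

/-- The (finite) set of words of length `n` over `{1,…,N}`. -/
def Words (N n : ℕ) : Finset (List (Fin N)) :=
  Finset.image (fun f : Fin n → Fin N => List.ofFn f) Finset.univ

/-- The adjoint block `A*_{n,k}`, defined entrywise from `A_{n,k}`:
`(A*_{n,k})_{α,β} = conj (A_{n,k})_{β,α}` for `|α| = n-1`, `|β| = n`. -/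
noncomputable def astar {N : ℕ} (A : ℕ → Fin N → Module.End ℂ (W N)) (n : ℕ)
    (k : Fin N) : Module.End ℂ (W N) :=
  Finsupp.lift (W N) ℂ (List (Fin N))
    (fun β => ∑ α ∈ Words N (n - 1), (starRingEnd ℂ) ((A n k (eb α)) β) • eb α)

/-- Partial sum of the first `m` steps. -/
def psum {L : ℕ} (f : Fin L → ℤ) (m : ℕ) : ℤ :=
  ∑ i : Fin L, if (i : ℕ) < m then f i else 0

open Classical in
/-- Motzkin-type paths of length `L` from height `j` to height `k`: step sequences
with values in `{-1,0,1}` (fall, level, rise) staying at nonnegative heights. -/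
noncomputable def pathsSet (L j k : ℕ) : Finset (Fin L → ℤ) :=
  (Fintype.piFinset fun _ => ({-1, 0, 1} : Finset ℤ)).filter
    (fun f => (∀ m ∈ Finset.range (L + 1), 0 ≤ (j : ℤ) + psum f m) ∧
      (j : ℤ) + psum f L = k)

/-- The weight of a single step of color `c` and increment `s`, taken at height `h`:
`A_{h+1,c}` for a rise, `B_{h,c}` for a level step, `A*_{h,c}` for a fall
(color-change steps have weight `I` and are omitted). -/
noncomputable def stepWeight {N : ℕ} (A B : ℕ → Fin N → Module.End ℂ (W N))
    (c : Fin N) (h s : ℤ) : Module.End ℂ (W N) :=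
  if s = 1 then A (h.toNat + 1) c else if s = 0 then B h.toNat c else astar A h.toNat c

/-- The weight `w(p)` of a path `p ∈ M_σ` starting at height `j`: the product of the
step weights in reverse order; the color of the `n`-th step is the `n`-th letter of
the reversed word `I(σ)`. -/
noncomputable def pathWeight {N : ℕ} (A B : ℕ → Fin N → Module.End ℂ (W N))
    (σ : List (Fin N)) (j : ℕ) (f : Fin σ.length → ℤ) : Module.End ℂ (W N) :=
  ((List.ofFn fun n : Fin σ.length =>
      stepWeight A B (σ.reverse.get (Fin.cast (List.length_reverse : σ.reverse.length = σ.length).symm n))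
        ((j : ℤ) + psum f n) (f n)).reverse).prod

/-- The Jacobi operator `J_k` on the span of the basis `{e_σ}`, with diagonal blocks
`B_{n,k}` and off-diagonal blocks `A_{n,k}`, `A*_{n,k}`. -/
noncomputable def Jop {N : ℕ} (A B : ℕ → Fin N → Module.End ℂ (W N)) (k : Fin N) :
    Module.End ℂ (W N) :=
  Finsupp.lift (W N) ℂ (List (Fin N))
    (fun τ => A (τ.length + 1) k (eb τ) + B τ.length k (eb τ)
      + astar A τ.length k (eb τ))

/-- `J_σ = J_{j_1} ⋯ J_{j_l}` for a word `σ = j_1 … j_l`. -/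
noncomputable def Jword {N : ℕ} (A B : ℕ → Fin N → Module.End ℂ (W N))
    (σ : List (Fin N)) : Module.End ℂ (W N) :=
  (σ.map (Jop A B)).prod

/-! The map `e_τ ↦ P τ` intertwines each Jacobi operator `J_k` with left multiplication by
`X_k` (this is the three-term recurrence), and `φ (P τ) = δ_{τ,∅}`; hence
`φ (X_σ) = (J_σ e_∅)(∅)`. Grade `W N` by word length: on level `m`, `J_k` is the sum of the
step operators `A_{m+1,k}`, `B_{m,k}`, `A*_{m,k}`, which land in levels `m + 1`, `m`, `m - 1`,
and `A*_{0,k} = 0`. Expanding `J_σ e_∅` letter by letter gives a sum over all step sequences,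
in which a sequence dipping below height `0` contributes `0` and one ending at height `h` lands
in level `h`; so only the paths of `M_σ` contribute to the `∅` entry. -/

section Levels

variable {N : ℕ}

abbrev level (N n : ℕ) : Submodule ℂ (W N) :=
  Finsupp.supported ℂ ℂ {τ : List (Fin N) | τ.length = n}

theorem mem_Words {α : List (Fin N)} {n : ℕ} : α ∈ Words N n ↔ α.length = n := by
  simp only [Words, Finset.mem_image, Finset.mem_univ, true_and]
  refine ⟨?_, fun h => ⟨fun i => α.get (i.cast h.symm), ?_⟩⟩
  · rintro ⟨f, rfl⟩
    exact List.length_ofFn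
  · subst h; exact List.ofFn_get α

theorem eb_mem_level (τ : List (Fin N)) : eb τ ∈ level N τ.length :=
  Finsupp.single_mem_supported ℂ 1 rfl

theorem apply_eq_zero_of_mem_level {n : ℕ} {v : W N} (hv : v ∈ level N n)
    {τ : List (Fin N)} (hτ : τ.length ≠ n) : v τ = 0 :=
  (Finsupp.mem_supported' ℂ v).mp hv τ hτ

theorem apply_mem_level {n : ℕ} {T : Module.End ℂ (W N)}
    (hT : ∀ β α : List (Fin N), T (eb β) α ≠ 0 → α.length = n) (v : W N) :
    T v ∈ level N n := by
  have hbasis : ∀ β, T (eb β) ∈ level N n :=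
    fun β => (Finsupp.mem_supported' ℂ _).mpr fun α hα => not_imp_comm.mp (hT β α) hα
  induction v using Finsupp.induction_linear with
  | zero => simp
  | add v w hv hw => simpa using add_mem hv hw
  | single β c =>
    rw [← mul_one c, ← smul_eq_mul, ← Finsupp.smul_single, map_smul]
    exact Submodule.smul_mem _ c (hbasis β)

theorem eqOn_level {n : ℕ} {S T : Module.End ℂ (W N)}
    (h : ∀ τ : List (Fin N), τ.length = n → S (eb τ) = T (eb τ)) {v : W N}
    (hv : v ∈ level N n) : S v = T v := by
  rw [level, Finsupp.supported_eq_span_single] at hv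
  refine LinearMap.eqOn_span' ?_ hv
  rintro _ ⟨τ, hτ, rfl⟩
  exact h τ hτ

theorem linearCombination_eb {M : Type*} [AddCommGroup M] [Module ℂ M]
    (P : List (Fin N) → M) (τ : List (Fin N)) :
    Finsupp.linearCombination ℂ P (eb τ) = P τ := by
  simp [eb]

theorem sum_Words_smul_eq_linearCombination {M : Type*} [AddCommGroup M] [Module ℂ M]
    (P : List (Fin N) → M) {n : ℕ} {w : W N} (hw : w ∈ level N n) :
    ∑ α ∈ Words N n, w α • P α = Finsupp.linearCombination ℂ P w := by
  rw [Finsupp.linearCombination_apply, Finsupp.sum_of_support_subset w _ _ (by simp)]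
  intro α hα
  exact mem_Words.mpr (hw hα)

end Levels

section Jacobi

variable {N : ℕ} (A B : ℕ → Fin N → Module.End ℂ (W N))

theorem astar_eb (n : ℕ) (k : Fin N) (β : List (Fin N)) :
    astar A n k (eb β)
      = ∑ α ∈ Words N (n - 1), (starRingEnd ℂ) ((A n k (eb α)) β) • eb α := by
  simp [astar, eb]

theorem astar_mem_level (n : ℕ) (k : Fin N) (v : W N) : astar A n k v ∈ level N (n - 1) := by
  refine apply_mem_level (fun β α hα => ?_) v
  rw [astar_eb, Finset.sum_apply'] at hα
  obtain ⟨γ, hγ, hne⟩ := Finset.exists_ne_zero_of_sum_ne_zero hα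
  rw [← mem_Words.mp hγ]
  exact (not_imp_comm.mp (apply_eq_zero_of_mem_level (eb_mem_level γ)) (right_ne_zero_of_mul hne))

theorem astar_zero {k : Fin N} (hA : ∀ β, A 0 k (eb β) = 0) : astar A 0 k = 0 := by
  unfold astar
  simp only [hA, Finsupp.coe_zero, Pi.zero_apply, map_zero, zero_smul, Finset.sum_const_zero]
  exact map_zero _

theorem Jop_eb (k : Fin N) (τ : List (Fin N)) :
    Jop A B k (eb τ)
      = A (τ.length + 1) k (eb τ) + B τ.length k (eb τ) + astar A τ.length k (eb τ) := by
  simp [Jop, eb]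

theorem Jop_apply_of_mem_level {m : ℕ} (k : Fin N) {v : W N} (hv : v ∈ level N m) :
    Jop A B k v = A (m + 1) k v + B m k v + astar A m k v :=
  eqOn_level (S := Jop A B k) (T := A (m + 1) k + B m k + astar A m k)
    (fun τ hτ => by simp [Jop_eb, hτ]) hv

theorem Jop_apply_eq_sum_stepWeight (k : Fin N) {h : ℤ} {v : W N} (hv : v ∈ level N h.toNat) :
    Jop A B k v = ∑ s ∈ ({-1, 0, 1} : Finset ℤ), stepWeight A B k h s v := by
  simp [Jop_apply_of_mem_level A B k hv, stepWeight, Finset.sum_insert, add_comm, add_left_comm]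

theorem Jword_cons (c : Fin N) (σ : List (Fin N)) :
    Jword A B (c :: σ) = Jop A B c * Jword A B σ := by
  simp [Jword]

theorem stepWeight_apply_eq_zero_or_mem_level
    (hA0 : ∀ k β, A 0 k (eb β) = 0)
    (hA1 : ∀ n k (β α : List (Fin N)), (A n k (eb β)) α ≠ 0 → α.length = n)
    (hB1 : ∀ n k (β α : List (Fin N)), (B n k (eb β)) α ≠ 0 → α.length = n)
    (c : Fin N) {h s : ℤ} (hh : 0 ≤ h) (hs : s ∈ ({-1, 0, 1} : Finset ℤ))
    {v : W N} (hv : v ∈ level N h.toNat) :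
    stepWeight A B c h s v = 0 ∨
      (0 ≤ h + s ∧ stepWeight A B c h s v ∈ level N (h + s).toNat) := by
  simp only [Finset.mem_insert, Finset.mem_singleton] at hs
  rcases hs with rfl | rfl | rfl
  · rcases (Int.le_iff_eq_or_lt.mp hh) with rfl | hpos
    · simp [stepWeight, astar_zero A (hA0 c)]
    · refine .inr ⟨by omega, ?_⟩
      simpa [stepWeight, show (h + -1).toNat = h.toNat - 1 by omega] using
        astar_mem_level A h.toNat c v
  · exact .inr ⟨by omega, by simpa [stepWeight] using apply_mem_level (hB1 h.toNat c) v⟩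
  · refine .inr ⟨by omega, ?_⟩
    simpa [stepWeight, show (h + 1).toNat = h.toNat + 1 by omega]
      using apply_mem_level (hA1 (h.toNat + 1) c) v

end Jacobi

section Paths

variable {N : ℕ} (A B : ℕ → Fin N → Module.End ℂ (W N))

theorem psum_zero {L : ℕ} (f : Fin L → ℤ) : psum f 0 = 0 := by
  simp [psum]

theorem psum_init {L : ℕ} (f : Fin (L + 1) → ℤ) {m : ℕ} (hm : m ≤ L) :
    psum (Fin.init f) m = psum f m := by
  simp [psum, Fin.sum_univ_castSucc, Fin.init, hm]

theorem psum_last {L : ℕ} (f : Fin (L + 1) → ℤ) :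
    psum f (L + 1) = psum f L + f (Fin.last L) := by
  rw [← psum_init f le_rfl]
  simp [psum, Fin.sum_univ_castSucc, Fin.init]

theorem pathsSet_subset_piFinset (L j k : ℕ) :
    pathsSet L j k ⊆ Fintype.piFinset fun _ => ({-1, 0, 1} : Finset ℤ) := fun f hf => by
  simp only [pathsSet, Finset.mem_filter] at hf
  exact hf.1

theorem pathWeight_nil (j : ℕ) (f : Fin 0 → ℤ) : pathWeight A B [] j f = 1 :=
  rfl

theorem pathWeight_cons (c : Fin N) (σ : List (Fin N)) (j : ℕ)
    (f : Fin (σ.length + 1) → ℤ) :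
    pathWeight A B (c :: σ) j f
      = stepWeight A B c ((j : ℤ) + psum f σ.length) (f (Fin.last σ.length))
        * pathWeight A B σ j (Fin.init f) := by
  unfold pathWeight
  rw [List.ofFn_succ', List.concat_eq_append, List.reverse_concat', List.prod_cons]
  have hletter : ∀ i : Fin σ.length,
      (c :: σ).reverse.get (Fin.cast (by simp) i.castSucc)
        = σ.reverse.get (Fin.cast (by simp) i) := by
    intro i
    simp [List.getElem_append_left]
  have hlast : (c :: σ).reverse.get (Fin.cast (by simp) (Fin.last σ.length)) = c := by
    simp
  have hheight : ∀ i : Fin σ.length, psum (Fin.init f) i = psum f i :=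
    fun i => psum_init f i.is_lt.le
  simp only [hletter, hlast, Fin.val_last, Fin.val_castSucc, hheight]
  rfl

theorem sum_piFinset_succ_eq_sum_snoc {M : Type*} [AddCommMonoid M] {L : ℕ} (S : Finset ℤ)
    (F : (Fin (L + 1) → ℤ) → M) :
    ∑ f ∈ Fintype.piFinset (fun _ => S), F f
      = ∑ g ∈ Fintype.piFinset (fun _ : Fin L => S), ∑ s ∈ S, F (Fin.snoc g s) := by
  have h := Finset.filter_piFinset_eq_map_snocEquiv (fun _ : Fin (L + 1) => S) (fun _ => True)
  simp only [Finset.filter_true] at h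
  rw [h, Finset.sum_map, Finset.sum_product_right]
  rfl

end Paths

section Expansion

variable {N : ℕ} (A B : ℕ → Fin N → Module.End ℂ (W N))
  (hA0 : ∀ k β, A 0 k (eb β) = 0)
  (hA1 : ∀ n k (β α : List (Fin N)), (A n k (eb β)) α ≠ 0 → α.length = n)
  (hB1 : ∀ n k (β α : List (Fin N)), (B n k (eb β)) α ≠ 0 → α.length = n)
include hA0 hA1 hB1

theorem pathWeight_apply_eq_zero_or_mem_level (σ : List (Fin N)) {j : ℕ} {v : W N}
    (hv : v ∈ level N j) {f : Fin σ.length → ℤ}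
    (hf : f ∈ Fintype.piFinset fun _ => ({-1, 0, 1} : Finset ℤ)) :
    pathWeight A B σ j f v = 0 ∨
      ((∀ m ∈ Finset.range (σ.length + 1), 0 ≤ (j : ℤ) + psum f m) ∧
        pathWeight A B σ j f v ∈ level N ((j : ℤ) + psum f σ.length).toNat) := by
  induction σ with
  | nil => exact .inr ⟨by simp [psum_zero], by simpa [pathWeight_nil, psum_zero] using hv⟩
  | cons c σ ih =>
    obtain ⟨hlast, hinit⟩ := Fin.mem_piFinset_iff_last_init.mp hf
    rw [pathWeight_cons, Module.End.mul_apply]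
    rcases ih hinit with h0 | ⟨hnonneg, hmem⟩
    · exact .inl (by rw [h0, map_zero])
    have hinit_height : ∀ m ∈ Finset.range (σ.length + 1), psum (Fin.init f) m = psum f m :=
      fun m hm => psum_init f (Nat.lt_succ_iff.mp (Finset.mem_range.mp hm))
    rw [hinit_height _ (by simp)] at hmem
    have hnonneg_last : 0 ≤ (j : ℤ) + psum f σ.length := by
      simpa [hinit_height] using hnonneg σ.length (by simp)
    rcases stepWeight_apply_eq_zero_or_mem_level A B hA0 hA1 hB1 c hnonneg_last hlast hmem with
      h0 | ⟨hstep, hmem'⟩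
    · exact .inl h0
    refine .inr ⟨?_, by simpa [psum_last, add_assoc] using hmem'⟩
    show ∀ m ∈ Finset.range (σ.length + 1 + 1), _
    rw [Finset.range_add_one, Finset.forall_mem_insert, psum_last, ← add_assoc]
    exact ⟨hstep, fun m hm => hinit_height m hm ▸ hnonneg m hm⟩

theorem pathWeight_apply_mem_level {σ : List (Fin N)} {j : ℕ} {v : W N} (hv : v ∈ level N j)
    {f : Fin σ.length → ℤ} (hf : f ∈ Fintype.piFinset fun _ => ({-1, 0, 1} : Finset ℤ)) :
    pathWeight A B σ j f v ∈ level N ((j : ℤ) + psum f σ.length).toNat := by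
  rcases pathWeight_apply_eq_zero_or_mem_level A B hA0 hA1 hB1 σ hv hf with h0 | ⟨-, hmem⟩
  · exact h0 ▸ zero_mem _
  · exact hmem

theorem Jword_apply_eq_sum_pathWeight (σ : List (Fin N)) {j : ℕ} {v : W N}
    (hv : v ∈ level N j) :
    Jword A B σ v = ∑ f ∈ Fintype.piFinset (fun _ : Fin σ.length => ({-1, 0, 1} : Finset ℤ)),
      pathWeight A B σ j f v := by
  induction σ with
  | nil => simp [Jword, pathWeight_nil]
  | cons c σ ih =>
    rw [Jword_cons, Module.End.mul_apply, ih, map_sum]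
    refine Eq.trans ?_ (sum_piFinset_succ_eq_sum_snoc (L := σ.length) _ _).symm
    refine Finset.sum_congr rfl fun g hg => ?_
    rw [Jop_apply_eq_sum_stepWeight A B c (pathWeight_apply_mem_level A B hA0 hA1 hB1 hv hg)]
    refine Finset.sum_congr rfl fun s _ => ?_
    rw [pathWeight_cons, Module.End.mul_apply, Fin.init_snoc, Fin.snoc_last,
      ← psum_init _ le_rfl, Fin.init_snoc]

theorem pathWeight_apply_nil_eq_zero {σ : List (Fin N)} {f : Fin σ.length → ℤ}
    (hf : f ∈ Fintype.piFinset fun _ => ({-1, 0, 1} : Finset ℤ))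
    (hf' : f ∉ pathsSet σ.length 0 0) :
    pathWeight A B σ 0 f (eb []) [] = 0 := by
  rcases pathWeight_apply_eq_zero_or_mem_level A B hA0 hA1 hB1 σ (j := 0)
      (eb_mem_level ([] : List (Fin N))) hf with h0 | ⟨hnonneg, hmem⟩
  · rw [h0, Finsupp.zero_apply]
  refine apply_eq_zero_of_mem_level hmem fun hend => hf' ?_
  have hend_nonneg := hnonneg σ.length (by simp)
  simp only [pathsSet, Finset.mem_filter]
  exact ⟨hf, hnonneg, by simp only [List.length_nil] at hend; omega⟩

end Expansion

theorem Xw_cons {N : ℕ} (c : Fin N) (σ : List (Fin N)) :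
    Xw (c :: σ) = FreeAlgebra.ι ℂ c * Xw σ := by
  simp [Xw]

theorem apply_linearCombination_eq_apply_nil {N : ℕ} (P : List (Fin N) → FreeAlgebra ℂ (Fin N))
    (φ : FreeAlgebra ℂ (Fin N) →ₗ[ℂ] ℂ) (hφP : ∀ α, φ (P α) = if α = [] then 1 else 0)
    (w : W N) :
    φ (Finsupp.linearCombination ℂ P w) = w [] := by
  have h : φ ∘ₗ Finsupp.linearCombination ℂ P = Finsupp.lapply [] :=
    Finsupp.basisSingleOne.ext fun τ => by simp [hφP, Finsupp.single_apply]
  exact LinearMap.congr_fun h w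

section Intertwining

variable {N : ℕ} {A B : ℕ → Fin N → Module.End ℂ (W N)}
  (P : List (Fin N) → FreeAlgebra ℂ (Fin N))
  (hA1 : ∀ n k (β α : List (Fin N)), (A n k (eb β)) α ≠ 0 → α.length = n)
  (hB1 : ∀ n k (β α : List (Fin N)), (B n k (eb β)) α ≠ 0 → α.length = n)
  (hrec : ∀ (k : Fin N) (τ : List (Fin N)),
    FreeAlgebra.ι ℂ k * P τ
      = (∑ α ∈ Words N (τ.length + 1), ((A (τ.length + 1) k (eb τ)) α) • P α)
      + (∑ α ∈ Words N τ.length, ((B τ.length k (eb τ)) α) • P α)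
      + (∑ α ∈ Words N (τ.length - 1), ((astar A τ.length k (eb τ)) α) • P α))
include hA1 hB1 hrec

theorem linearCombination_comp_Jop (k : Fin N) :
    Finsupp.linearCombination ℂ P ∘ₗ Jop A B k
      = LinearMap.mulLeft ℂ (FreeAlgebra.ι ℂ k) ∘ₗ Finsupp.linearCombination ℂ P := by
  refine Finsupp.basisSingleOne.ext fun τ => ?_
  change Finsupp.linearCombination ℂ P (Jop A B k (eb τ))
    = FreeAlgebra.ι ℂ k * Finsupp.linearCombination ℂ P (eb τ)
  rw [Jop_eb, map_add, map_add, linearCombination_eb, hrec,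
    sum_Words_smul_eq_linearCombination P (apply_mem_level (hA1 _ k) _),
    sum_Words_smul_eq_linearCombination P (apply_mem_level (hB1 _ k) _),
    sum_Words_smul_eq_linearCombination P (astar_mem_level A _ k _)]

theorem linearCombination_Jword (σ : List (Fin N)) (v : W N) :
    Finsupp.linearCombination ℂ P (Jword A B σ v) = Xw σ * Finsupp.linearCombination ℂ P v := by
  induction σ generalizing v with
  | nil => simp [Jword, Xw]
  | cons c σ ih =>
    rw [Jword_cons, Module.End.mul_apply,
      ← LinearMap.comp_apply, linearCombination_comp_Jop P hA1 hB1 hrec, LinearMap.comp_apply,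
      LinearMap.mulLeft_apply, ih, Xw_cons, mul_assoc]

end Intertwining

theorem moments_eq_sum_path_weights_general {N : ℕ}
    (φ : FreeAlgebra ℂ (Fin N) →ₗ[ℂ] ℂ)
    (P : List (Fin N) → FreeAlgebra ℂ (Fin N)) (hP0 : P [] = 1)
    (hortho : ∀ α β : List (Fin N),
      φ (star (P β) * P α) = if α = β then 1 else 0)
    (A B : ℕ → Fin N → Module.End ℂ (W N))
    (hA0 : ∀ n k (β : List (Fin N)), β.length + 1 ≠ n → A n k (eb β) = 0)
    (hA1 : ∀ n k (β α : List (Fin N)), (A n k (eb β)) α ≠ 0 → α.length = n)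
    (hB1 : ∀ n k (β α : List (Fin N)), (B n k (eb β)) α ≠ 0 → α.length = n)
    (hrec : ∀ (k : Fin N) (τ : List (Fin N)),
      FreeAlgebra.ι ℂ k * P τ
        = (∑ α ∈ Words N (τ.length + 1), ((A (τ.length + 1) k (eb τ)) α) • P α)
          + (∑ α ∈ Words N τ.length, ((B τ.length k (eb τ)) α) • P α)
          + (∑ α ∈ Words N (τ.length - 1), ((astar A τ.length k (eb τ)) α) • P α))
    (σ : List (Fin N)) :
    φ (Xw σ)
      = ∑ f ∈ pathsSet σ.length 0 0,
          ((pathWeight A B σ 0 f) (eb ([] : List (Fin N)))) ([] : List (Fin N)) := by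
  have hφP : ∀ α, φ (P α) = if α = [] then 1 else 0 := fun α => by
    simpa [hP0] using hortho α []
  have hA0' : ∀ k β, A 0 k (eb β) = 0 := fun k β => hA0 0 k β (Nat.add_one_ne_zero _)
  have hmoment : φ (Xw σ) = Jword A B σ (eb []) [] := by
    rw [← apply_linearCombination_eq_apply_nil P φ hφP, linearCombination_Jword P hA1 hB1 hrec,
      linearCombination_eb, hP0, mul_one]
  rw [hmoment, Jword_apply_eq_sum_pathWeight A B hA0' hA1 hB1 σ (eb_mem_level []),
    Finset.sum_apply']
  exact (Finset.sum_subset (pathsSet_subset_piFinset _ _ _)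
    fun f hf hf' => pathWeight_apply_nil_eq_zero A B hA0' hA1 hB1 hf hf').symm

/-- if `φ` is a strictly positive unital functional on `P_N` whose
orthonormal polynomials `{φ_τ}` satisfy the three-term recurrence
`X_k Φ_n = Φ_{n+1} A_{n+1,k} + Φ_n B_{n,k} + Φ_{n-1} A*_{n,k}` with Jacobi
coefficients `A_{n,k}`, `B_{n,k}`, then for every nonempty word `σ` the moment
`s_σ = φ(X_σ)` equals `Σ_{p ∈ M_σ} w(p)` — the sum over all admissible colored
Motzkin-type paths from `(0,i_p,0)` to `(|σ|,i_1,0)` of the `(∅,∅)` entry of the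
matrix weight `w(p)`. -/
theorem moments_eq_sum_path_weights {N : ℕ}
    (φ : FreeAlgebra ℂ (Fin N) →ₗ[ℂ] ℂ) (hφ1 : φ 1 = 1)
    (hφpos : ∀ P : FreeAlgebra ℂ (Fin N), P ≠ 0 → 0 < φ (star P * P))
    (P : List (Fin N) → FreeAlgebra ℂ (Fin N)) (hP0 : P [] = 1)
    (hortho : ∀ α β : List (Fin N),
      φ (star (P β) * P α) = if α = β then 1 else 0)
    (A B : ℕ → Fin N → Module.End ℂ (W N))
    (hA0 : ∀ n k (β : List (Fin N)), β.length + 1 ≠ n → A n k (eb β) = 0)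
    (hA1 : ∀ n k (β α : List (Fin N)), (A n k (eb β)) α ≠ 0 → α.length = n)
    (hB0 : ∀ n k (β : List (Fin N)), β.length ≠ n → B n k (eb β) = 0)
    (hB1 : ∀ n k (β α : List (Fin N)), (B n k (eb β)) α ≠ 0 → α.length = n)
    (hBsa : ∀ n k (α β : List (Fin N)),
      (starRingEnd ℂ) ((B n k (eb β)) α) = (B n k (eb α)) β)
    (hrec : ∀ (k : Fin N) (τ : List (Fin N)),
      FreeAlgebra.ι ℂ k * P τ
        = (∑ α ∈ Words N (τ.length + 1), ((A (τ.length + 1) k (eb τ)) α) • P α)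
          + (∑ α ∈ Words N τ.length, ((B τ.length k (eb τ)) α) • P α)
          + (∑ α ∈ Words N (τ.length - 1), ((astar A τ.length k (eb τ)) α) • P α))
    (σ : List (Fin N)) (hσ : σ ≠ []) :
    φ (Xw σ)
      = ∑ f ∈ pathsSet σ.length 0 0,
          ((pathWeight A B σ 0 f) (eb ([] : List (Fin N)))) ([] : List (Fin N)) :=
  moments_eq_sum_path_weights_general φ P hP0 hortho A B hA0 hA1 hB1 hrec σ
end
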